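/- arXiv:1312.5573 — 2 statements merged into one kernel-verified Lean document; each statement's English description precedes it below -/
import Mathlib

section
/- Let N ≥ 2, let 0 ≤ J₁ ≤ 4, and let u : {0,…,N} → S¹ ⊂ ℝ² satisfy the periodic boundary condition ⟨u¹, u⁰⟩ = ⟨u^N, u^{N-1}⟩. Then -J₁·∑_{i=0}^{N-2} ⟨uⁱ, uⁱ⁺¹⟩ + ∑_{i=0}^{N-2} ⟨uⁱ, uⁱ⁺²⟩ ≥ -(1 + J₁²/8)·(N-1), with equality if and only if uⁱ⁺² - (J₁/2)·uⁱ⁺¹ + uⁱ = 0 for all i = 0,…,N-2. -/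
/-!
Completing the square: for unit vectors, summing
`‖uⁱ⁺² - (J₁/2) uⁱ⁺¹ + uⁱ‖² = 2 + J₁²/4 - J₁(⟨uⁱ, uⁱ⁺¹⟩ + ⟨uⁱ⁺¹, uⁱ⁺²⟩) + 2⟨uⁱ, uⁱ⁺²⟩`
over `i` and using the boundary condition to identify the shifted nearest-neighbour sum with the
unshifted one shows that the energy equals `-(1 + J₁²/8)(N-1)` plus half a sum of squares.
-/

open RealInnerProductSpace Finset

theorem Finset.sum_range_shift_of_eq {M : Type*} [AddCommGroup M] (f : ℕ → M) (n : ℕ)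
    (hf : f n = f 0) : ∑ i ∈ range n, f (i + 1) = ∑ i ∈ range n, f i := by
  have h := (sum_range_succ f n).symm.trans (sum_range_succ' f n)
  rwa [hf, add_left_inj, eq_comm] at h

theorem Finset.sum_norm_sq_eq_zero_iff {ι E : Type*} [NormedAddCommGroup E] {s : Finset ι}
    {f : ι → E} : ∑ i ∈ s, ‖f i‖ ^ 2 = 0 ↔ ∀ i ∈ s, f i = 0 := by
  simp [sum_eq_zero_iff_of_nonneg fun i _ => sq_nonneg ‖f i‖]

section

variable {E : Type*} [NormedAddCommGroup E] [InnerProductSpace ℝ E]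

theorem norm_sub_smul_add_sq_of_norm_eq_one {a b c : E} (ha : ‖a‖ = 1) (hb : ‖b‖ = 1)
    (hc : ‖c‖ = 1) (t : ℝ) :
    ‖c - t • b + a‖ ^ 2 = 2 + t ^ 2 - 2 * t * (⟪a, b⟫ + ⟪b, c⟫) + 2 * ⟪a, c⟫ := by
  rw [← real_inner_self_eq_norm_sq]
  simp only [inner_add_left, inner_add_right, inner_sub_left, inner_sub_right,
    real_inner_smul_left, real_inner_smul_right, real_inner_self_eq_norm_sq, norm_smul, mul_pow,
    Real.norm_eq_abs, sq_abs, ha, hb, hc]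
  rw [real_inner_comm b a, real_inner_comm c a, real_inner_comm c b]
  ring

theorem chain_energy_eq_half_sum_norm_sq_sub (n : ℕ) (J : ℝ) (u : ℕ → E) (hu : ∀ i ≤ n + 1, ‖u i‖ = 1)
    (hper : ⟪u n, u (n + 1)⟫ = ⟪u 0, u 1⟫) :
    -J * ∑ i ∈ range n, ⟪u i, u (i + 1)⟫ + ∑ i ∈ range n, ⟪u i, u (i + 2)⟫ =
      (∑ i ∈ range n, ‖u (i + 2) - (J / 2) • u (i + 1) + u i‖ ^ 2) / 2 -
        (1 + J ^ 2 / 8) * n := by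
  have hsq : ∀ i ∈ range n, ‖u (i + 2) - (J / 2) • u (i + 1) + u i‖ ^ 2 =
      2 + (J / 2) ^ 2 - 2 * (J / 2) * (⟪u i, u (i + 1)⟫ + ⟪u (i + 1), u (i + 2)⟫) +
        2 * ⟪u i, u (i + 2)⟫ := fun i hi => by
    have := mem_range.mp hi
    exact norm_sub_smul_add_sq_of_norm_eq_one (hu _ (by omega)) (hu _ (by omega))
      (hu _ (by omega)) _
  have hshift : ∑ i ∈ range n, ⟪u (i + 1), u (i + 2)⟫ = ∑ i ∈ range n, ⟪u i, u (i + 1)⟫ :=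
    sum_range_shift_of_eq (fun i => ⟪u i, u (i + 1)⟫) n hper
  rw [sum_congr rfl hsq, sum_add_distrib, sum_sub_distrib, sum_add_distrib, ← mul_sum,
    ← mul_sum, sum_add_distrib, hshift]
  simp only [sum_const, card_range, nsmul_eq_mul]
  ring

end

theorem stmt_6_general (N : ℕ) (hN : 2 ≤ N) (J₁ : ℝ)
    (u : ℕ → EuclideanSpace ℝ (Fin 2)) (hu : ∀ i ≤ N, ‖u i‖ = 1)
    (hper : ⟪u 1, u 0⟫ = ⟪u N, u (N - 1)⟫) :
    (-J₁ * ∑ i ∈ Finset.range (N - 1), ⟪u i, u (i + 1)⟫ +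
        ∑ i ∈ Finset.range (N - 1), ⟪u i, u (i + 2)⟫ ≥
      -(1 + J₁ ^ 2 / 8) * ((N : ℝ) - 1)) ∧
    (-J₁ * ∑ i ∈ Finset.range (N - 1), ⟪u i, u (i + 1)⟫ +
        ∑ i ∈ Finset.range (N - 1), ⟪u i, u (i + 2)⟫ =
      -(1 + J₁ ^ 2 / 8) * ((N : ℝ) - 1) ↔
      ∀ i ∈ Finset.range (N - 1), u (i + 2) - (J₁ / 2) • u (i + 1) + u i = 0) := by
  obtain ⟨n, rfl⟩ : ∃ n, N = n + 1 := ⟨N - 1, by omega⟩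
  rw [Nat.add_sub_cancel] at hper
  have hper' : ⟪u n, u (n + 1)⟫ = ⟪u 0, u 1⟫ := by
    rw [real_inner_comm, ← hper, real_inner_comm]
  have hcast : ((n + 1 : ℕ) : ℝ) - 1 = n := by push_cast; ring
  rw [Nat.add_sub_cancel, hcast, chain_energy_eq_half_sum_norm_sq_sub n J₁ u hu hper',
    ← sum_norm_sq_eq_zero_iff]
  have hS : 0 ≤ ∑ i ∈ range n, ‖u (i + 2) - (J₁ / 2) • u (i + 1) + u i‖ ^ 2 :=
    sum_nonneg fun i _ => sq_nonneg _
  constructor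
  · linarith
  · constructor <;> intro h <;> linarith

theorem stmt_6 (N : ℕ) (hN : 2 ≤ N) (J₁ : ℝ) (hJ0 : 0 ≤ J₁) (hJ4 : J₁ ≤ 4)
    (u : ℕ → EuclideanSpace ℝ (Fin 2)) (hu : ∀ i ≤ N, ‖u i‖ = 1)
    (hper : ⟪u 1, u 0⟫ = ⟪u N, u (N - 1)⟫) :
    (-J₁ * ∑ i ∈ Finset.range (N - 1), ⟪u i, u (i + 1)⟫ +
        ∑ i ∈ Finset.range (N - 1), ⟪u i, u (i + 2)⟫ ≥
      -(1 + J₁ ^ 2 / 8) * ((N : ℝ) - 1)) ∧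
    (-J₁ * ∑ i ∈ Finset.range (N - 1), ⟪u i, u (i + 1)⟫ +
        ∑ i ∈ Finset.range (N - 1), ⟪u i, u (i + 2)⟫ =
      -(1 + J₁ ^ 2 / 8) * ((N : ℝ) - 1) ↔
      ∀ i ∈ Finset.range (N - 1), u (i + 2) - (J₁ / 2) • u (i + 1) + u i = 0) :=
  stmt_6_general N hN J₁ u hu hper
end

section
/- Let 0 ≤ J₁ ≤ 4, N ≥ 2, and let u : {0,…,N} → S¹ with periodic boundary condition achieve the minimal energy -(1 + J₁²/8)·(N-1) of E(u) = -J₁·∑_{i=0}^{N-2}⟨uⁱ,uⁱ⁺¹⟩ + ∑_{i=0}^{N-2}⟨uⁱ,uⁱ⁺²⟩. If J₁ > 0, then for all i = 0,…,N-2 one has ⟨uⁱ, uⁱ⁺¹⟩ = J₁/4 and ⟨uⁱ, uⁱ⁺²⟩ = J₁²/8 - 1. -/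
/-!
For unit vectors `a, b, c` in an oriented plane write `p = ⟪a, b⟫`, `q = ⟪b, c⟫` and `x, y` for
the oriented areas of `(a, b)` and `(b, c)`. Then `p² + x² = 1 = q² + y²` and `⟪a, c⟫ = p q - x y`,
so the energy of the triple is bounded below by a sum of squares:
`⟪a, c⟫ - J (p + q) / 2 + (1 + J² / 8) = ((p + q - J / 2)² + (x - y)²) / 2 ≥ 0`.
Summed over consecutive triples, the periodic boundary condition makes the two nearest-neighbour
sums coincide, so the total is `E(u) + (1 + J² / 8) (N - 1)`, which vanishes at a minimiser.
Hence every triple has `p + q = J / 2` and `x = y`; then `p² = q²` forces `p = q = J / 4`, and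
`⟪a, c⟫ = p² - x² = 2 p² - 1 = J² / 8 - 1`.
-/

open RealInnerProductSpace Finset Module EuclideanSpace

theorem Finset.sum_range_succ_eq_sum_range {M : Type*} [AddCancelCommMonoid M] (f : ℕ → M) {n : ℕ}
    (h : f n = f 0) : ∑ i ∈ range n, f (i + 1) = ∑ i ∈ range n, f i := by
  have := (sum_range_succ' f n).symm.trans (sum_range_succ f n)
  rwa [h, add_left_inj] at this

section Triplet

variable {E : Type*} [NormedAddCommGroup E] [InnerProductSpace ℝ E]

noncomputable def tripletExcess (J : ℝ) (a b c : E) : ℝ :=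
  ⟪a, c⟫ - J / 2 * (⟪a, b⟫ + ⟪b, c⟫) + (1 + J ^ 2 / 8)

theorem sum_tripletExcess (J : ℝ) (u : ℕ → E) {n : ℕ}
    (h : ⟪u n, u (n + 1)⟫ = ⟪u 0, u 1⟫) :
    ∑ i ∈ range n, tripletExcess J (u i) (u (i + 1)) (u (i + 2)) =
      -J * ∑ i ∈ range n, ⟪u i, u (i + 1)⟫ + ∑ i ∈ range n, ⟪u i, u (i + 2)⟫ +
        (1 + J ^ 2 / 8) * n := by
  have hshift := sum_range_succ_eq_sum_range (fun i => ⟪u i, u (i + 1)⟫) h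
  simp only [tripletExcess, sum_add_distrib, sum_sub_distrib, ← mul_sum, mul_add, sum_const,
    card_range, nsmul_eq_mul] at hshift ⊢
  rw [hshift]
  ring

variable [Fact (finrank ℝ E = 2)]

theorem Orientation.inner_eq_inner_mul_inner_sub_areaForm_mul_areaForm
    (o : Orientation ℝ E (Fin 2)) (a c : E) {b : E} (hb : ‖b‖ = 1) :
    ⟪a, c⟫ = ⟪a, b⟫ * ⟪b, c⟫ - o.areaForm a b * o.areaForm b c := by
  have h := o.inner_mul_inner_add_areaForm_mul_areaForm b a c
  rw [o.areaForm_swap b a, real_inner_comm a b, hb] at h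
  linear_combination -h

theorem Orientation.inner_sq_add_areaForm_sq_of_norm_eq_one
    (o : Orientation ℝ E (Fin 2)) {a b : E} (ha : ‖a‖ = 1) (hb : ‖b‖ = 1) :
    ⟪a, b⟫ ^ 2 + o.areaForm a b ^ 2 = 1 := by
  rw [o.inner_sq_add_areaForm_sq, ha, hb]; norm_num

theorem tripletExcess_eq (o : Orientation ℝ E (Fin 2)) (J : ℝ) {a b c : E}
    (ha : ‖a‖ = 1) (hb : ‖b‖ = 1) (hc : ‖c‖ = 1) :
    tripletExcess J a b c =
      ((⟪a, b⟫ + ⟪b, c⟫ - J / 2) ^ 2 + (o.areaForm a b - o.areaForm b c) ^ 2) / 2 := by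
  unfold tripletExcess
  linear_combination o.inner_eq_inner_mul_inner_sub_areaForm_mul_areaForm a c hb
    - o.inner_sq_add_areaForm_sq_of_norm_eq_one ha hb / 2
    - o.inner_sq_add_areaForm_sq_of_norm_eq_one hb hc / 2

theorem nonempty_orientation : Nonempty (Orientation ℝ E (Fin 2)) :=
  have := FiniteDimensional.of_fact_finrank_eq_two (K := ℝ) (V := E)
  ⟨(Module.finBasisOfFinrankEq ℝ E Fact.out).orientation⟩

theorem tripletExcess_nonneg (J : ℝ) {a b c : E}
    (ha : ‖a‖ = 1) (hb : ‖b‖ = 1) (hc : ‖c‖ = 1) : 0 ≤ tripletExcess J a b c := by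
  obtain ⟨o⟩ := nonempty_orientation (E := E)
  rw [tripletExcess_eq o J ha hb hc]
  positivity

theorem inner_eq_of_tripletExcess_eq_zero {J : ℝ} (hJ : J ≠ 0) {a b c : E}
    (ha : ‖a‖ = 1) (hb : ‖b‖ = 1) (hc : ‖c‖ = 1) (h : tripletExcess J a b c = 0) :
    ⟪a, b⟫ = J / 4 ∧ ⟪a, c⟫ = J ^ 2 / 8 - 1 := by
  obtain ⟨o⟩ := nonempty_orientation (E := E)
  have hac := o.inner_eq_inner_mul_inner_sub_areaForm_mul_areaForm a c hb
  have hab := o.inner_sq_add_areaForm_sq_of_norm_eq_one ha hb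
  have hbc := o.inner_sq_add_areaForm_sq_of_norm_eq_one hb hc
  rw [tripletExcess_eq o J ha hb hc] at h
  set x := o.areaForm a b
  set y := o.areaForm b c
  have hsum : ⟪a, b⟫ + ⟪b, c⟫ = J / 2 := by
    nlinarith [sq_nonneg (⟪a, b⟫ + ⟪b, c⟫ - J / 2), sq_nonneg (x - y)]
  have hxy : x = y := by nlinarith [sq_nonneg (⟪a, b⟫ + ⟪b, c⟫ - J / 2), sq_nonneg (x - y)]
  -- `⟪a, b⟫² = ⟪b, c⟫²` while `⟪a, b⟫ + ⟪b, c⟫ ≠ 0`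
  have hsym : ⟪a, b⟫ = ⟪b, c⟫ := by
    have : (⟪a, b⟫ - ⟪b, c⟫) * (J / 2) = 0 := by
      linear_combination -(⟪a, b⟫ - ⟪b, c⟫) * hsum + hab - hbc - (x + y) * hxy
    simpa [hJ, sub_eq_zero] using this
  have hab' : ⟪a, b⟫ = J / 4 := by linarith
  refine ⟨hab', ?_⟩
  rw [hac, ← hsym, ← hxy, hab']
  linear_combination -hab + (J / 4 + ⟪a, b⟫) * hab'

end Triplet

theorem stmt_7_general (N : ℕ) (J₁ : ℝ)
    (u : ℕ → EuclideanSpace ℝ (Fin 2)) (hu : ∀ i ≤ N, ‖u i‖ = 1)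
    (hper : ⟪u 1, u 0⟫ = ⟪u N, u (N - 1)⟫)
    (hmin : -J₁ * ∑ i ∈ Finset.range (N - 1), ⟪u i, u (i + 1)⟫ +
        ∑ i ∈ Finset.range (N - 1), ⟪u i, u (i + 2)⟫ =
      -(1 + J₁ ^ 2 / 8) * ((N : ℝ) - 1))
    (hJpos : 0 < J₁) :
    ∀ i ∈ Finset.range (N - 1),
      ⟪u i, u (i + 1)⟫ = J₁ / 4 ∧ ⟪u i, u (i + 2)⟫ = J₁ ^ 2 / 8 - 1 := by
  intro i hi
  have hN : 1 ≤ N := by have := mem_range.1 hi; omega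
  have hunit : ∀ j ∈ range (N - 1), ‖u j‖ = 1 ∧ ‖u (j + 1)‖ = 1 ∧ ‖u (j + 2)‖ = 1 :=
    fun j hj => have := mem_range.1 hj; ⟨hu _ (by omega), hu _ (by omega), hu _ (by omega)⟩
  have hwrap : ⟪u (N - 1), u (N - 1 + 1)⟫ = ⟪u 0, u 1⟫ := by
    rw [Nat.sub_add_cancel hN, real_inner_comm, ← hper, real_inner_comm]
  have hzero : ∀ j ∈ range (N - 1), tripletExcess J₁ (u j) (u (j + 1)) (u (j + 2)) = 0 := by
    refine (sum_eq_zero_iff_of_nonneg fun j hj => ?_).1 ?_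
    · obtain ⟨h₀, h₁, h₂⟩ := hunit j hj
      exact tripletExcess_nonneg J₁ h₀ h₁ h₂
    · rw [sum_tripletExcess J₁ u hwrap, hmin, Nat.cast_sub hN]
      push_cast
      ring
  obtain ⟨h₀, h₁, h₂⟩ := hunit i hi
  exact inner_eq_of_tripletExcess_eq_zero hJpos.ne' h₀ h₁ h₂ (hzero i hi)

theorem stmt_7 (N : ℕ) (hN : 2 ≤ N) (J₁ : ℝ) (hJ0 : 0 ≤ J₁) (hJ4 : J₁ ≤ 4)
    (u : ℕ → EuclideanSpace ℝ (Fin 2)) (hu : ∀ i ≤ N, ‖u i‖ = 1)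
    (hper : ⟪u 1, u 0⟫ = ⟪u N, u (N - 1)⟫)
    (hmin : -J₁ * ∑ i ∈ Finset.range (N - 1), ⟪u i, u (i + 1)⟫ +
        ∑ i ∈ Finset.range (N - 1), ⟪u i, u (i + 2)⟫ =
      -(1 + J₁ ^ 2 / 8) * ((N : ℝ) - 1))
    (hJpos : 0 < J₁) :
    ∀ i ∈ Finset.range (N - 1),
      ⟪u i, u (i + 1)⟫ = J₁ / 4 ∧ ⟪u i, u (i + 2)⟫ = J₁ ^ 2 / 8 - 1 :=
  stmt_7_general N J₁ u hu hper hmin hJpos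
end
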